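/- Let x, y ~ N(0, I_p) be independent standard Gaussian vectors, w ~ N(0, I_m) independent of both, σ ≥ 0, and B a fixed p×m matrix. Define Ξ = x^T B B^T (x − y) + σ·w^T B^T (x − y). Then E[Ξ] = ‖B‖_F² and Var[Ξ] = 3‖B B^T‖_F² + 2σ²‖B‖_F². -/

import Mathlib

/-!
Stack `(x, y, w)` into one standard Gaussian vector `z` indexed by `Fin p ⊕ (Fin p ⊕ Fin m)`;
then `Ξ = zᵀ Q z` for the block matrix `Q = xiMatrix B σ`. For a standard Gaussian vector,
Isserlis' formula `E[zᵢzⱼzₖzₗ] = δᵢⱼδₖₗ + δᵢₖδⱼₗ + δᵢₗδⱼₖ` gives `E[zᵀQz] = tr Q` and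
`E[(zᵀQz)²] = (tr Q)² + ‖Q‖_F² + tr (Q²)`. Here `tr Q = ‖B‖_F²`,
`‖Q‖_F² = 2‖BBᵀ‖_F² + 2σ²‖B‖_F²` and `tr (Q²) = ‖BBᵀ‖_F²`. The one-dimensional moments
`E[g²] = 1`, `E[g³] = 0`, `E[g⁴] = 3` come from Gaussian integration by parts,
`E[g^(k+2)] = (k+1) E[g^k]`.
-/

open MeasureTheory ProbabilityTheory Matrix
open scoped NNReal

lemma hasDerivAt_gaussianPDFReal_zero (v : ℝ≥0) (x : ℝ) :
    HasDerivAt (gaussianPDFReal 0 v) (-(x / v) * gaussianPDFReal 0 v x) x := by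
  have h : HasDerivAt (fun y : ℝ => -(y - 0) ^ 2 / (2 * v)) (-(x / v)) x :=
    (((hasDerivAt_id x).sub_const 0).pow 2).neg.div_const (2 * (v : ℝ)) |>.congr_deriv
      (by simp only [id, sub_zero]; ring)
  rw [gaussianPDFReal_def]
  exact (h.exp.const_mul _).congr_deriv (by ring)

lemma integrable_pow_gaussianReal (μ : ℝ) (v : ℝ≥0) (k : ℕ) :
    Integrable (fun x => x ^ k) (gaussianReal μ v) :=
  ((memLp_id_gaussianReal k).integrable_norm_pow').mono (by fun_prop) (by simp)

lemma integrable_gaussianPDFReal_mul_pow (μ : ℝ) {v : ℝ≥0} (hv : v ≠ 0) (k : ℕ) :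
    Integrable (fun x => gaussianPDFReal μ v x * x ^ k) := by
  have h := integrable_pow_gaussianReal μ v k
  rw [gaussianReal_of_var_ne_zero _ hv, integrable_withDensity_iff_integrable_smul'
    (measurable_gaussianPDF _ _) (ae_of_all _ fun _ ↦ gaussianPDF_lt_top)] at h
  simpa [toReal_gaussianPDF] using h

lemma integral_pow_add_two_gaussianReal (v : ℝ≥0) (k : ℕ) :
    ∫ x, x ^ (k + 2) ∂gaussianReal 0 v = (k + 1) * v * ∫ x, x ^ k ∂gaussianReal 0 v := by
  rcases eq_or_ne v 0 with rfl | hv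
  · simp
  simp only [integral_gaussianReal_eq_integral_smul hv, smul_eq_mul]
  have hI := integrable_gaussianPDFReal_mul_pow 0 hv
  have hparts := integral_mul_deriv_eq_deriv_mul_of_integrable
    (u := fun x : ℝ => x ^ (k + 1)) (u' := fun x => (k + 1) * x ^ k)
    (v := gaussianPDFReal 0 v) (v' := fun x => -(x / v) * gaussianPDFReal 0 v x)
    (fun x _ => by simpa using hasDerivAt_pow (k + 1) x)
    (fun x _ => hasDerivAt_gaussianPDFReal_zero v x)
    (((hI (k + 2)).const_mul (-(v : ℝ)⁻¹)).congr (ae_of_all _ fun x => by simp; ring))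
    (((hI k).const_mul (k + 1)).congr (ae_of_all _ fun x => by simp; ring))
    ((hI (k + 1)).congr (ae_of_all _ fun x => by simp; ring))
  have hleft : ∫ x, x ^ (k + 1) * (-(x / v) * gaussianPDFReal 0 v x)
      = -(v : ℝ)⁻¹ * ∫ x, gaussianPDFReal 0 v x * x ^ (k + 2) := by
    rw [← integral_const_mul]; congr 1; ext x; ring
  have hright : ∫ x, (k + 1) * x ^ k * gaussianPDFReal 0 v x
      = (k + 1) * ∫ x, gaussianPDFReal 0 v x * x ^ k := by
    rw [← integral_const_mul]; congr 1; ext x; ring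
  rw [hleft, hright] at hparts
  have hv' : (v : ℝ) ≠ 0 := by exact_mod_cast hv
  field_simp at hparts
  linear_combination -hparts

lemma integral_sq_gaussianReal (v : ℝ≥0) : ∫ x, x ^ 2 ∂gaussianReal 0 v = v := by
  simpa using integral_pow_add_two_gaussianReal v 0

lemma integral_pow_three_gaussianReal (v : ℝ≥0) : ∫ x, x ^ 3 ∂gaussianReal 0 v = 0 := by
  simpa using integral_pow_add_two_gaussianReal v 1

lemma integral_pow_four_gaussianReal (v : ℝ≥0) :
    ∫ x, x ^ 4 ∂gaussianReal 0 v = 3 * v ^ 2 := by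
  rw [integral_pow_add_two_gaussianReal, integral_sq_gaussianReal]
  push_cast
  ring

section QuadraticForm

variable {ι : Type*} [Fintype ι]

lemma dotProduct_mulVec_self_eq_sum {R : Type*} [CommSemiring R] (Q : Matrix ι ι R) (z : ι → R) :
    z ⬝ᵥ Q *ᵥ z = ∑ q : ι × ι, Q q.1 q.2 * (z q.1 * z q.2) := by
  simp only [dotProduct, mulVec, Finset.mul_sum, Fintype.sum_prod_type]
  exact Finset.sum_congr rfl fun i _ => Finset.sum_congr rfl fun j _ => by ring

lemma sq_dotProduct_mulVec_self_eq_sum {R : Type*} [CommSemiring R] (Q : Matrix ι ι R)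
    (z : ι → R) :
    (z ⬝ᵥ Q *ᵥ z) ^ 2 = ∑ q : (ι × ι) × (ι × ι),
      Q q.1.1 q.1.2 * Q q.2.1 q.2.2 * (z q.1.1 * z q.1.2 * z q.2.1 * z q.2.2) := by
  rw [dotProduct_mulVec_self_eq_sum, sq, Finset.sum_mul_sum, ← Finset.sum_product']
  exact Finset.sum_congr rfl fun q _ => by ring

variable [DecidableEq ι]

lemma multiset_prod_map_eq_prod_pow_count {M : Type*} [CommMonoid M] (s : Multiset ι)
    (z : ι → M) :
    (s.map z).prod = ∏ t, z t ^ s.count t := by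
  rw [Finset.prod_multiset_map_count]
  exact Finset.prod_subset (Finset.subset_univ _) fun t _ ht => by
    rw [Multiset.count_eq_zero_of_notMem (by simpa using ht), pow_zero]

lemma integrable_multiset_prod_map_pi_gaussianReal (s : Multiset ι) :
    Integrable (fun z : ι → ℝ => (s.map z).prod) (Measure.pi fun _ => gaussianReal 0 1) := by
  simp_rw [multiset_prod_map_eq_prod_pow_count]
  exact Integrable.fintype_prod fun t => integrable_pow_gaussianReal 0 1 _

lemma integral_multiset_prod_map_pi_gaussianReal (s : Multiset ι) :
    ∫ z : ι → ℝ, (s.map z).prod ∂(Measure.pi fun _ => gaussianReal 0 1)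
      = ∏ t ∈ s.toFinset, ∫ x, x ^ s.count t ∂gaussianReal 0 1 := by
  simp_rw [multiset_prod_map_eq_prod_pow_count]
  rw [integral_fintype_prod_eq_prod (fun t x => x ^ s.count t)]
  exact (Finset.prod_subset (Finset.subset_univ _) fun t _ ht => by
    simp [Multiset.count_eq_zero_of_notMem (by simpa using ht)]).symm

lemma integral_mul_pi_gaussianReal (i j : ι) :
    ∫ z : ι → ℝ, z i * z j ∂(Measure.pi fun _ => gaussianReal 0 1) = if i = j then 1 else 0 := by
  have := integral_multiset_prod_map_pi_gaussianReal {i, j}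
  by_cases hij : i = j <;>
    simp_all [Multiset.count_cons, integral_sq_gaussianReal, eq_comm (a := j)]

lemma integral_mul_mul_mul_pi_gaussianReal (i j k l : ι) :
    ∫ z : ι → ℝ, z i * z j * z k * z l ∂(Measure.pi fun _ => gaussianReal 0 1)
      = (if i = j then 1 else 0) * (if k = l then 1 else 0)
        + (if i = k then 1 else 0) * (if j = l then 1 else 0)
        + (if i = l then 1 else 0) * (if j = k then 1 else 0) := by
  have := integral_multiset_prod_map_pi_gaussianReal {i, j, k, l}
  simp only [Multiset.insert_eq_cons, Multiset.map_cons, Multiset.prod_cons,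
    Multiset.map_singleton, Multiset.prod_singleton, ← mul_assoc] at this
  rw [this]
  -- `Multiset.count_cons` produces both `i = j` and `j = i`; the `eq_comm` instances orient them.
  by_cases hij : i = j <;> by_cases hik : i = k <;> by_cases hil : i = l <;>
    by_cases hjk : j = k <;> by_cases hjl : j = l <;> by_cases hkl : k = l <;>
    simp_all [Multiset.count_cons, integral_sq_gaussianReal, integral_pow_three_gaussianReal,
      integral_pow_four_gaussianReal, eq_comm (a := j) (b := i), eq_comm (a := k) (b := i),
      eq_comm (a := l) (b := i), eq_comm (a := k) (b := j), eq_comm (a := l) (b := j),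
      eq_comm (a := l) (b := k), one_add_one_eq_two, two_add_one_eq_three]

lemma integral_dotProduct_mulVec_self_pi_gaussianReal (Q : Matrix ι ι ℝ) :
    ∫ z, z ⬝ᵥ Q *ᵥ z ∂(Measure.pi fun _ => gaussianReal 0 1) = Q.trace := by
  simp_rw [dotProduct_mulVec_self_eq_sum]
  rw [integral_finsetSum _ fun q _ => ((integrable_multiset_prod_map_pi_gaussianReal
    {q.1, q.2}).const_mul (Q q.1 q.2)).congr (ae_of_all _ fun z => by simp)]
  simp [integral_const_mul, integral_mul_pi_gaussianReal, Fintype.sum_prod_type, Matrix.trace]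

lemma integral_sq_dotProduct_mulVec_self_pi_gaussianReal (Q : Matrix ι ι ℝ) :
    ∫ z, (z ⬝ᵥ Q *ᵥ z) ^ 2 ∂(Measure.pi fun _ => gaussianReal 0 1)
      = Q.trace ^ 2 + ∑ i, ∑ j, Q i j ^ 2 + (Q * Q).trace := by
  simp_rw [sq_dotProduct_mulVec_self_eq_sum]
  rw [integral_finsetSum _ fun q _ => ((integrable_multiset_prod_map_pi_gaussianReal
    {q.1.1, q.1.2, q.2.1, q.2.2}).const_mul (Q q.1.1 q.1.2 * Q q.2.1 q.2.2)).congr (ae_of_all _ fun z => by simp [mul_assoc])]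
  simp [integral_const_mul, integral_mul_mul_mul_pi_gaussianReal, Fintype.sum_prod_type,
    Matrix.trace, mul_add, Finset.sum_add_distrib, sq, Finset.sum_mul_sum, Matrix.mul_apply]

end QuadraticForm

lemma integral_comp_sumElim_prod_pi {α β δ X : Type*} [Fintype α] [Fintype β] [Fintype δ]
    [MeasurableSpace X] (ρ : Measure X) [SigmaFinite ρ] (f : (α ⊕ (β ⊕ δ) → X) → ℝ) :
    ∫ z, f (Sum.elim z.1 (Sum.elim z.2.1 z.2.2)) ∂((Measure.pi fun _ : α => ρ).prod
        ((Measure.pi fun _ : β => ρ).prod (Measure.pi fun _ : δ => ρ)))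
      = ∫ v, f v ∂(Measure.pi fun _ => ρ) := by
  let e := (MeasurableEquiv.prodCongr (.refl _) (MeasurableEquiv.sumPiEquivProdPi _).symm).trans
    (MeasurableEquiv.sumPiEquivProdPi fun _ : α ⊕ (β ⊕ δ) => X).symm
  have he : MeasurePreserving e _ _ :=
    (measurePreserving_sumPiEquivProdPi_symm fun _ : α ⊕ (β ⊕ δ) => ρ).comp
      ((MeasurePreserving.id (Measure.pi fun _ : α => ρ)).prod
        (measurePreserving_sumPiEquivProdPi_symm fun _ : β ⊕ δ => ρ))
  exact he.integral_comp' f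

section XiMatrix

variable {p m : ℕ}

def xiMatrix (B : Matrix (Fin p) (Fin m) ℝ) (σ : ℝ) :
    Matrix (Fin p ⊕ (Fin p ⊕ Fin m)) (Fin p ⊕ (Fin p ⊕ Fin m)) ℝ :=
  fromBlocks (B * Bᵀ) (fromCols (-(B * Bᵀ)) 0) (fromRows 0 (σ • Bᵀ))
    (fromBlocks 0 0 (-(σ • Bᵀ)) 0)

lemma sumElim_dotProduct_xiMatrix_mulVec (B : Matrix (Fin p) (Fin m) ℝ) (σ : ℝ)
    (x y : Fin p → ℝ) (w : Fin m → ℝ) :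
    Sum.elim x (Sum.elim y w) ⬝ᵥ xiMatrix B σ *ᵥ Sum.elim x (Sum.elim y w)
      = x ⬝ᵥ (B * Bᵀ) *ᵥ (x - y) + σ * (w ⬝ᵥ Bᵀ *ᵥ (x - y)) := by
  simp only [xiMatrix, fromBlocks_mulVec, fromRows_mulVec, fromCols_mulVec, Sum.elim_comp_inl,
    Sum.elim_comp_inr, sumElim_dotProduct_sumElim, zero_mulVec, add_zero, Sum.elim_add_add,
    zero_add, neg_mulVec, smul_mulVec, mulVec_sub, dotProduct_sub, dotProduct_add,
    dotProduct_zero, dotProduct_neg, dotProduct_smul, smul_eq_mul, mul_sub]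
  ring

lemma trace_xiMatrix (B : Matrix (Fin p) (Fin m) ℝ) (σ : ℝ) :
    (xiMatrix B σ).trace = ∑ i, ∑ j, B i j ^ 2 := by
  simp [xiMatrix, Matrix.trace, Fintype.sum_sum_type, Matrix.mul_apply, sq]

lemma sum_sq_xiMatrix (B : Matrix (Fin p) (Fin m) ℝ) (σ : ℝ) :
    ∑ i, ∑ j, xiMatrix B σ i j ^ 2
      = 2 * ∑ i, ∑ j, (B * Bᵀ) i j ^ 2 + 2 * σ ^ 2 * ∑ i, ∑ j, B i j ^ 2 := by
  simp only [xiMatrix, Fintype.sum_sum_type, fromBlocks_apply₁₁, fromBlocks_apply₁₂,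
    fromBlocks_apply₂₁, fromBlocks_apply₂₂, fromRows_apply_inl, fromRows_apply_inr,
    fromCols_apply_inl, fromCols_apply_inr, Matrix.zero_apply, Matrix.neg_apply,
    Matrix.smul_apply, transpose_apply, smul_eq_mul, neg_sq, mul_pow, ne_eq,
    OfNat.ofNat_ne_zero, not_false_eq_true, zero_pow, Finset.sum_const_zero, add_zero,
    zero_add, Finset.sum_add_distrib, ← Finset.mul_sum]
  rw [Finset.sum_comm (γ := Fin m)]
  ring

lemma trace_xiMatrix_mul_self (B : Matrix (Fin p) (Fin m) ℝ) (σ : ℝ) :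
    (xiMatrix B σ * xiMatrix B σ).trace = ∑ i, ∑ j, (B * Bᵀ) i j ^ 2 := by
  have hsymm (i j) : (B * Bᵀ) j i = (B * Bᵀ) i j := by
    rw [← transpose_apply (B * Bᵀ), transpose_mul, transpose_transpose]
  simp only [Matrix.trace, Matrix.diag, Matrix.mul_apply, xiMatrix, Fintype.sum_sum_type,
    fromBlocks_apply₁₁, fromBlocks_apply₁₂, fromBlocks_apply₂₁, fromBlocks_apply₂₂,
    fromRows_apply_inl, fromRows_apply_inr, fromCols_apply_inl, fromCols_apply_inr,
    Matrix.zero_apply, Matrix.neg_apply, Matrix.smul_apply, mul_zero, zero_mul,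
    Finset.sum_const_zero, add_zero, hsymm]
  simp [sq]

end XiMatrix

theorem statement11_general (p m : ℕ) (B : Matrix (Fin p) (Fin m) ℝ) (σ : ℝ)
    (μ : Measure ((Fin p → ℝ) × (Fin p → ℝ) × (Fin m → ℝ)))
    (hμ : μ = (Measure.pi fun _ : Fin p => gaussianReal 0 1).prod
      ((Measure.pi fun _ : Fin p => gaussianReal 0 1).prod
        (Measure.pi fun _ : Fin m => gaussianReal 0 1)))
    (Ξ : (Fin p → ℝ) × (Fin p → ℝ) × (Fin m → ℝ) → ℝ)
    (hΞ : ∀ z, Ξ z = z.1 ⬝ᵥ (B * Bᵀ).mulVec (z.1 - z.2.1)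
      + σ * (z.2.2 ⬝ᵥ Bᵀ.mulVec (z.1 - z.2.1))) :
    (∫ z, Ξ z ∂μ = ∑ i, ∑ j, B i j ^ 2) ∧
    (∫ z, Ξ z ^ 2 ∂μ) - (∫ z, Ξ z ∂μ) ^ 2
      = 3 * (∑ i, ∑ j, (B * Bᵀ) i j ^ 2) + 2 * σ ^ 2 * ∑ i, ∑ j, B i j ^ 2 := by
  set Q := xiMatrix B σ
  have hΞQ : Ξ = fun z => Sum.elim z.1 (Sum.elim z.2.1 z.2.2) ⬝ᵥ Q *ᵥ
      Sum.elim z.1 (Sum.elim z.2.1 z.2.2) := by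
    ext z
    rw [hΞ, sumElim_dotProduct_xiMatrix_mulVec]
  have hmean : ∫ z, Ξ z ∂μ = ∑ i, ∑ j, B i j ^ 2 := by
    rw [hμ, hΞQ, integral_comp_sumElim_prod_pi _ fun v => v ⬝ᵥ Q *ᵥ v,
      integral_dotProduct_mulVec_self_pi_gaussianReal, trace_xiMatrix]
  have hsq : ∫ z, Ξ z ^ 2 ∂μ = (∑ i, ∑ j, B i j ^ 2) ^ 2
      + 3 * (∑ i, ∑ j, (B * Bᵀ) i j ^ 2) + 2 * σ ^ 2 * ∑ i, ∑ j, B i j ^ 2 := by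
    rw [hμ, hΞQ, integral_comp_sumElim_prod_pi _ fun v => (v ⬝ᵥ Q *ᵥ v) ^ 2,
      integral_sq_dotProduct_mulVec_self_pi_gaussianReal, trace_xiMatrix, sum_sq_xiMatrix,
      trace_xiMatrix_mul_self]
    ring
  refine ⟨hmean, ?_⟩
  rw [hsq, hmean]
  ring

theorem statement11 (p m : ℕ) (B : Matrix (Fin p) (Fin m) ℝ) (σ : ℝ) (hσ : 0 ≤ σ)
    (μ : Measure ((Fin p → ℝ) × (Fin p → ℝ) × (Fin m → ℝ)))
    (hμ : μ = (Measure.pi fun _ : Fin p => gaussianReal 0 1).prod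
      ((Measure.pi fun _ : Fin p => gaussianReal 0 1).prod
        (Measure.pi fun _ : Fin m => gaussianReal 0 1)))
    (Ξ : (Fin p → ℝ) × (Fin p → ℝ) × (Fin m → ℝ) → ℝ)
    (hΞ : ∀ z, Ξ z = z.1 ⬝ᵥ (B * Bᵀ).mulVec (z.1 - z.2.1)
      + σ * (z.2.2 ⬝ᵥ Bᵀ.mulVec (z.1 - z.2.1))) :
    (∫ z, Ξ z ∂μ = ∑ i, ∑ j, B i j ^ 2) ∧
    (∫ z, Ξ z ^ 2 ∂μ) - (∫ z, Ξ z ∂μ) ^ 2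
      = 3 * (∑ i, ∑ j, (B * Bᵀ) i j ^ 2) + 2 * σ ^ 2 * ∑ i, ∑ j, B i j ^ 2 :=
  statement11_general p m B σ μ hμ Ξ hΞ
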